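/- arXiv:0906.5083 — 5 statements merged into one kernel-verified Lean document; each statement's English description precedes it below -/
import Mathlib

section
/- Let (Ω, 𝒜, P) be a probability space and D : ℝ≥0 × Ω → ℝ≥0 a stochastic process (each D(s) is a random variable) such that almost every sample path s ↦ D(s,ω) is nondecreasing, right-continuous, and tends to ∞ as s → ∞. Define E(t) = inf{ s ≥ 0 : D(s) > t }. Then for any fixed s₁,…,sₙ ≥ 0, the equality P[D(sᵢ) < tᵢ for i = 1,…,n] = P[E(tᵢ) > sᵢ for i = 1,…,n] holds for Lebesgue-almost every (t₁,…,tₙ) ∈ ℝⁿ≥0. Moreover, if almost every sample path of D is strictly increasing, then this equality holds for all t₁,…,tₙ ≥ 0. -/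
/-!
Pathwise, monotonicity and right-continuity of `D` give
`{D sᵢ < tᵢ ∀ i} ⊆ {sᵢ < E tᵢ ∀ i} ⊆ {D sᵢ ≤ tᵢ ∀ i}` up to a null set. The two outer events
differ only on `⋃ i, {D sᵢ = tᵢ}`, and `D sᵢ` has at most countably many atoms, so this union is
`P`-null for Lebesgue-a.e. `t`. If the paths are strictly increasing, `sᵢ < E tᵢ` already forces
`D sᵢ < tᵢ`, closing the gap for every `t`.
-/

open Filter MeasureTheory Set

noncomputable def firstPassage (f : ℝ → ℝ) (t : ℝ) : ℝ := sInf {s | 0 ≤ s ∧ t < f s}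

section firstPassage

variable {f : ℝ → ℝ} {s t : ℝ}

theorem firstPassage_le (hs : 0 ≤ s) (h : t < f s) : firstPassage f t ≤ s :=
  csInf_le ⟨0, fun _ hu => hu.1⟩ ⟨hs, h⟩

theorem le_of_lt_firstPassage (hs : 0 ≤ s) (h : s < firstPassage f t) : f s ≤ t :=
  le_of_not_gt fun h' => (firstPassage_le hs h').not_gt h

theorem lt_firstPassage (hmono : MonotoneOn f (Ici 0)) (hrc : ContinuousWithinAt f (Ici s) s)
    (htop : Tendsto f atTop atTop) (hs : 0 ≤ s) (h : f s < t) : s < firstPassage f t := by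
  obtain ⟨u, hsu, hu⟩ := mem_nhdsGE_iff_exists_Ico_subset.1 (hrc (Iio_mem_nhds h))
  have hne : {v | 0 ≤ v ∧ t < f v}.Nonempty :=
    ((htop.eventually_gt_atTop t).and (eventually_ge_atTop 0)).exists.imp fun _ h => h.symm
  refine hsu.trans_le (le_csInf hne fun v ⟨hv, htv⟩ => le_of_not_gt fun hvu => ?_)
  rcases le_or_gt v s with hvs | hsv
  · exact (hmono hv hs hvs).not_gt (h.trans htv)
  · exact (hu ⟨hsv.le, hvu⟩ : f v < t).not_gt htv

theorem lt_of_lt_firstPassage (hmono : StrictMonoOn f (Ici 0)) (hs : 0 ≤ s)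
    (h : s < firstPassage f t) : f s < t := by
  refine (le_of_lt_firstPassage hs h).lt_of_ne fun hst => h.not_ge ?_
  refine le_of_forall_pos_le_add fun ε hε => firstPassage_le (by linarith) ?_
  exact hst ▸ hmono hs (show 0 ≤ s + ε by linarith) (by linarith)

end firstPassage

theorem ae_forall_measure_eq_eq_zero {Ω ι : Type*} [MeasurableSpace Ω] [Fintype ι]
    (P : Measure Ω) [SFinite P] {X : ι → Ω → ℝ} (hX : ∀ i, Measurable (X i)) :
    ∀ᵐ t ∂(volume : Measure (ι → ℝ)), ∀ i, P {ω | X i ω = t i} = 0 := by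
  refine ae_all_iff.2 fun i => ?_
  have hcount : ∀ᵐ x ∂volume, P {ω | X i ω = x} = 0 := by
    filter_upwards [measure_eq_zero_iff_ae_notMem.1
      ((Measure.countable_meas_level_set_pos (μ := P) (hX i)).measure_zero volume)] with x hx
    simpa using hx
  rw [MeasureTheory.volume_pi]
  exact Measure.tendsto_eval_ae_ae (μ := fun _ : ι => (volume : Measure ℝ)) hcount

theorem measure_forall_le_eq_forall_lt {Ω ι : Type*} [MeasurableSpace Ω] [Finite ι]
    (P : Measure Ω) {X : ι → Ω → ℝ} {t : ι → ℝ} (ht : ∀ i, P {ω | X i ω = t i} = 0) :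
    P {ω | ∀ i, X i ω ≤ t i} = P {ω | ∀ i, X i ω < t i} := by
  have hne : ∀ᵐ ω ∂P, ∀ i, X i ω ≠ t i :=
    ae_all_iff.2 fun i => measure_eq_zero_iff_ae_notMem.1 (ht i)
  exact measure_congr (hne.mono fun ω hω => propext (forall_congr' fun i => (hω i).le_iff_lt))

/-- Let `D` be a stochastic process on a probability space whose
sample paths are a.s. nonnegative, nondecreasing, right-continuous, and tend to `∞`,
and let `E t = inf {s ≥ 0 : D s > t}` be its inverse. Then for fixed `s₁,…,sₙ ≥ 0`,
`P[D sᵢ < tᵢ, i = 1,…,n] = P[E tᵢ > sᵢ, i = 1,…,n]` for Lebesgue-a.e.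
`(t₁,…,tₙ) ∈ ℝⁿ≥0`; and if the paths are a.s. strictly increasing, the equality
holds for all `t₁,…,tₙ ≥ 0`. -/
theorem inverse_process_tail_eq {Ω : Type*} [MeasurableSpace Ω]
    (P : Measure Ω) [IsProbabilityMeasure P]
    (D : ℝ → Ω → ℝ) (hmeas : ∀ s : ℝ, Measurable (D s))
    (hpath : ∀ᵐ ω ∂P, MonotoneOn (fun s => D s ω) (Ici 0) ∧
      (∀ s : ℝ, 0 ≤ s → 0 ≤ D s ω) ∧
      (∀ s : ℝ, 0 ≤ s → ContinuousWithinAt (fun u => D u ω) (Ici s) s) ∧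
      Tendsto (fun s => D s ω) atTop atTop)
    (E : ℝ → Ω → ℝ) (hE : ∀ t ω, E t ω = sInf {s : ℝ | 0 ≤ s ∧ t < D s ω})
    (n : ℕ) (s : Fin n → ℝ) (hs : ∀ i, 0 ≤ s i) :
    (∀ᵐ t ∂(volume : Measure (Fin n → ℝ)), (∀ i, 0 ≤ t i) →
      P {ω | ∀ i, D (s i) ω < t i} = P {ω | ∀ i, s i < E (t i) ω}) ∧
    ((∀ᵐ ω ∂P, StrictMonoOn (fun u => D u ω) (Ici 0)) →
      ∀ t : Fin n → ℝ, (∀ i, 0 ≤ t i) →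
        P {ω | ∀ i, D (s i) ω < t i} = P {ω | ∀ i, s i < E (t i) ω}) := by
  obtain rfl : E = fun t ω => firstPassage (D · ω) t := funext fun t => funext (hE t)
  have hlt_le_passage (t : Fin n → ℝ) :
      P {ω | ∀ i, D (s i) ω < t i} ≤ P {ω | ∀ i, s i < firstPassage (D · ω) (t i)} :=
    measure_mono_ae <| hpath.mono fun ω ⟨hmono, _, hrc, htop⟩ h i =>
      lt_firstPassage hmono (hrc _ (hs i)) htop (hs i) (h i)
  have hpassage_le_le (t : Fin n → ℝ) :
      P {ω | ∀ i, s i < firstPassage (D · ω) (t i)} ≤ P {ω | ∀ i, D (s i) ω ≤ t i} :=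
    measure_mono fun ω h i => le_of_lt_firstPassage (hs i) (h i)
  refine ⟨?_, fun hstrict t _ => ?_⟩
  · filter_upwards [ae_forall_measure_eq_eq_zero P fun i => hmeas (s i)] with t ht _
    exact (hlt_le_passage t).antisymm
      ((hpassage_le_le t).trans (measure_forall_le_eq_forall_lt P ht).le)
  · exact (hlt_le_passage t).antisymm <| measure_mono_ae <|
      hstrict.mono fun ω hω h i => lt_of_lt_firstPassage hω (hs i) (h i)
end

section
/- Let (Ω, 𝒜, P) be a probability space and D : ℝ≥0 × Ω → ℝ≥0 a stochastic process whose sample paths are almost surely nondecreasing, right-continuous, and tend to ∞ as s → ∞, and let E(t) = inf{ s ≥ 0 : D(s) > t }. Then for any s₁,…,sₙ ≥ 0 and any λ₁,…,λₙ > 0: ∫_{ℝⁿ≥0} exp(−λ₁t₁ − ⋯ − λₙtₙ) · P[E(tᵢ) > sᵢ for i = 1,…,n] dt₁⋯dtₙ = (λ₁⋯λₙ)⁻¹ · 𝔼[ exp(−λ₁D(s₁) − ⋯ − λₙD(sₙ)) ]. -/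
open Filter MeasureTheory Set

/-! Almost surely, `{E(tᵢ) > sᵢ ∀ i}` lies between `{D(sᵢ) < tᵢ ∀ i}` and `{D(sᵢ) ≤ tᵢ ∀ i}`:
the lower inclusion uses right-continuity of the path, the upper one is the definition of the
infimum. The two outer probabilities differ only when some `tᵢ` is an atom of the law of `D(sᵢ)`,
which happens for a Lebesgue-null set of `t`. For the strict version, Tonelli turns the left-hand
side into `𝔼 ∫_{t > D(s)} exp(-λ·t) dt = 𝔼 ∏ᵢ λᵢ⁻¹ exp(-λᵢ D(sᵢ))`. -/

theorem lt_sInf_of_apply_lt {f : ℝ → ℝ} {s t : ℝ} (hmono : MonotoneOn f (Ici 0))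
    (hcont : ContinuousWithinAt f (Ici s) s) (htop : Tendsto f atTop atTop) (hs : 0 ≤ s)
    (h : f s < t) : s < sInf {u : ℝ | 0 ≤ u ∧ t < f u} := by
  have hne : {u : ℝ | 0 ≤ u ∧ t < f u}.Nonempty :=
    ((eventually_ge_atTop 0).and (htop.eventually_gt_atTop t)).exists
  obtain ⟨u, hfu, hsu⟩ : ∃ u, f u < t ∧ s < u :=
    (((hcont.mono Ioi_subset_Ici_self).eventually (Iio_mem_nhds h)).and
      self_mem_nhdsWithin).exists
  refine hsu.trans_le (le_csInf hne fun v ⟨hv, hfv⟩ => ?_)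
  by_contra! hvu
  exact (hmono hv (hs.trans hsu.le) hvu.le).not_gt (hfu.trans hfv)

theorem integral_exp_neg_mul_Ioi {b : ℝ} (hb : 0 < b) (c : ℝ) :
    ∫ x in Ioi c, Real.exp (-(b * x)) = b⁻¹ * Real.exp (-(b * c)) := by
  simpa [neg_mul, div_neg, neg_div, div_eq_inv_mul] using
    integral_exp_mul_Ioi (neg_lt_zero.2 hb) c

section Pi

variable {ι : Type*} [Fintype ι] {lam : ι → ℝ}

theorem exp_neg_sum_mul_eq_prod (t : ι → ℝ) :
    Real.exp (-∑ i, lam i * t i) = ∏ i, Real.exp (-(lam i * t i)) := by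
  rw [← Finset.sum_neg_distrib, Real.exp_sum]

theorem integrableOn_univ_pi_Ioi_exp_neg_sum (hlam : ∀ i, 0 < lam i) (c : ι → ℝ) :
    IntegrableOn (fun t : ι → ℝ => Real.exp (-∑ i, lam i * t i))
      (univ.pi fun i => Ioi (c i)) := by
  simp_rw [IntegrableOn, volume_pi, Measure.restrict_pi_pi, exp_neg_sum_mul_eq_prod]
  exact Integrable.fintype_prod fun i => by
    simpa only [neg_mul, IntegrableOn] using exp_neg_integrableOn_Ioi (c i) (hlam i)

theorem integral_univ_pi_Ioi_exp_neg_sum (hlam : ∀ i, 0 < lam i) (c : ι → ℝ) :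
    ∫ t in univ.pi (fun i => Ioi (c i)), Real.exp (-∑ i, lam i * t i)
      = (∏ i, lam i)⁻¹ * Real.exp (-∑ i, lam i * c i) := by
  rw [volume_pi, Measure.restrict_pi_pi]
  simp_rw [exp_neg_sum_mul_eq_prod]
  rw [integral_fintype_prod_eq_prod (fun i x => Real.exp (-(lam i * x)))]
  simp_rw [integral_exp_neg_mul_Ioi (hlam _), Finset.prod_mul_distrib, Finset.prod_inv_distrib]

theorem setLIntegral_univ_pi_Ioi_exp_neg_sum (hlam : ∀ i, 0 < lam i) (c : ι → ℝ) :
    ∫⁻ t in univ.pi (fun i => Ioi (c i)), ENNReal.ofReal (Real.exp (-∑ i, lam i * t i))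
      = ENNReal.ofReal ((∏ i, lam i)⁻¹ * Real.exp (-∑ i, lam i * c i)) := by
  rw [← integral_univ_pi_Ioi_exp_neg_sum hlam, ofReal_integral_eq_lintegral_ofReal
    (integrableOn_univ_pi_Ioi_exp_neg_sum hlam c) (ae_of_all _ fun _ => (Real.exp_pos _).le)]

end Pi

theorem lintegral_mul_measure_preimage_prodMk {α β : Type*} [MeasurableSpace α]
    [MeasurableSpace β] {μ : Measure α} {ν : Measure β} [SFinite μ] [SFinite ν]
    {S : Set (α × β)} (hS : MeasurableSet S) {w : α → ENNReal} (hw : Measurable w) :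
    ∫⁻ a, w a * ν (Prod.mk a ⁻¹' S) ∂μ = ∫⁻ b, ∫⁻ a in (fun a => (a, b)) ⁻¹' S, w a ∂μ ∂ν := by
  -- both sides are `((μ.withDensity w).prod ν) S`
  have h := lintegral_withDensity_eq_lintegral_mul μ hw
    (measurable_measure_prodMk_left (ν := ν) hS)
  simp only [Pi.mul_apply] at h
  rw [← h, ← Measure.prod_apply hS, Measure.prod_apply_symm hS]
  exact lintegral_congr fun b => withDensity_apply _ (measurable_prodMk_right hS)

theorem ae_measure_forall_le_eq_measure_forall_lt {Ω ι : Type*} [MeasurableSpace Ω] [Fintype ι]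
    (P : Measure Ω) [SFinite P] {X : Ω → ι → ℝ} (hX : Measurable X) :
    ∀ᵐ t : ι → ℝ, P {ω | ∀ i, X ω i ≤ t i} = P {ω | ∀ i, X ω i < t i} := by
  have hatoms : ∀ᵐ t : ι → ℝ, ∀ i, P {ω | X ω i = t i} = 0 := by
    refine ae_all_iff.2 fun i => ae_iff.2 ?_
    rw [volume_pi]
    have hcount := Measure.countable_meas_level_set_pos (μ := P) ((measurable_pi_apply i).comp hX)
    simpa [pos_iff_ne_zero] using
      Measure.pi_eval_preimage_null (fun _ : ι => (volume : Measure ℝ)) (hcount.measure_zero _)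
  filter_upwards [hatoms] with t ht
  refine le_antisymm ?_ (measure_mono fun ω hω i => (hω i).le)
  calc P {ω | ∀ i, X ω i ≤ t i}
      ≤ P ({ω | ∀ i, X ω i < t i} ∪ ⋃ i, {ω | X ω i = t i}) :=
        measure_mono fun ω hω => or_iff_not_imp_right.2 fun h i =>
          (hω i).lt_of_ne fun heq => h (mem_iUnion.2 ⟨i, heq⟩)
    _ ≤ P {ω | ∀ i, X ω i < t i} + P (⋃ i, {ω | X ω i = t i}) := measure_union_le _ _
    _ = P {ω | ∀ i, X ω i < t i} := by rw [measure_iUnion_null ht, add_zero]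

theorem integrable_exp_neg_sum_mul {Ω ι : Type*} [MeasurableSpace Ω] [Fintype ι]
    (P : Measure Ω) [IsFiniteMeasure P] {X : Ω → ι → ℝ} (hX : Measurable X)
    (hX0 : ∀ᵐ ω ∂P, ∀ i, 0 ≤ X ω i) {lam : ι → ℝ} (hlam : ∀ i, 0 ≤ lam i) :
    Integrable (fun ω => Real.exp (-∑ i, lam i * X ω i)) P := by
  refine (integrable_const 1).mono' (by fun_prop) ?_
  filter_upwards [hX0] with ω hω
  rw [Real.norm_of_nonneg (Real.exp_pos _).le, Real.exp_le_one_iff, neg_nonpos]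
  exact Finset.sum_nonneg fun i _ => mul_nonneg (hlam i) (hω i)

theorem integral_exp_neg_sum_mul_measure_forall_lt {Ω ι : Type*} [MeasurableSpace Ω] [Fintype ι]
    (P : Measure Ω) [IsFiniteMeasure P] {X : Ω → ι → ℝ} (hX : Measurable X)
    (hX0 : ∀ᵐ ω ∂P, ∀ i, 0 ≤ X ω i) {lam : ι → ℝ} (hlam : ∀ i, 0 < lam i) :
    ∫ t in {t : ι → ℝ | ∀ i, 0 ≤ t i},
        Real.exp (-∑ i, lam i * t i) * (P {ω | ∀ i, X ω i < t i}).toReal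
      = (∏ i, lam i)⁻¹ * ∫ ω, Real.exp (-∑ i, lam i * X ω i) ∂P := by
  set T := {t : ι → ℝ | ∀ i, 0 ≤ t i}
  set S := {p : (ι → ℝ) × Ω | ∀ i, X p.2 i < p.1 i}
  have hS : MeasurableSet S := by
    rw [show S = ⋂ i, {p | X p.2 i < p.1 i} by ext; simp [S]]
    exact .iInter fun i => measurableSet_lt (by fun_prop) (by fun_prop)
  have hw : Measurable fun t : ι → ℝ => Real.exp (-∑ i, lam i * t i) := by fun_prop
  have hslice : ∀ᵐ ω ∂P, ∫⁻ t in (fun t => (t, ω)) ⁻¹' S,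
      ENNReal.ofReal (Real.exp (-∑ i, lam i * t i)) ∂volume.restrict T
        = ENNReal.ofReal ((∏ i, lam i)⁻¹ * Real.exp (-∑ i, lam i * X ω i)) := by
    filter_upwards [hX0] with ω hω
    have hST : (fun t => (t, ω)) ⁻¹' S ∩ T = univ.pi fun i => Ioi (X ω i) := by
      ext t
      simp only [S, T, mem_inter_iff, mem_preimage, mem_univ_pi, mem_Ioi]
      exact ⟨fun h => h.1, fun h => ⟨h, fun i => (hω i).trans (h i).le⟩⟩
    rw [Measure.restrict_restrict (measurable_prodMk_right hS), hST,
      setLIntegral_univ_pi_Ioi_exp_neg_sum hlam]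
  have hc : 0 ≤ (∏ i, lam i)⁻¹ := inv_nonneg.2 (Finset.prod_nonneg fun i _ => (hlam i).le)
  have hG0 : ∀ ω, 0 ≤ (∏ i, lam i)⁻¹ * Real.exp (-∑ i, lam i * X ω i) :=
    fun ω => mul_nonneg hc (Real.exp_pos _).le
  have hG := (integrable_exp_neg_sum_mul P hX hX0 fun i => (hlam i).le).const_mul (∏ i, lam i)⁻¹
  calc ∫ t in T, Real.exp (-∑ i, lam i * t i) * (P {ω | ∀ i, X ω i < t i}).toReal
      = (∫⁻ t in T,
          ENNReal.ofReal (Real.exp (-∑ i, lam i * t i)) * P (Prod.mk t ⁻¹' S)).toReal := by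
        have hmeas := hw.fun_mul (measurable_measure_prodMk_left (ν := P) hS).ennreal_toReal
        refine (integral_eq_lintegral_of_nonneg_ae (ae_of_all _ fun t => by positivity)
          hmeas.aestronglyMeasurable).trans ?_
        congr 1
        refine lintegral_congr fun t => ?_
        rw [ENNReal.ofReal_mul (Real.exp_pos _).le, ENNReal.ofReal_toReal (measure_ne_top P _)]
    _ = (∫⁻ ω, ENNReal.ofReal ((∏ i, lam i)⁻¹ * Real.exp (-∑ i, lam i * X ω i)) ∂P).toReal := by
        rw [lintegral_mul_measure_preimage_prodMk hS hw.ennreal_ofReal, lintegral_congr_ae hslice]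
    _ = (∏ i, lam i)⁻¹ * ∫ ω, Real.exp (-∑ i, lam i * X ω i) ∂P := by
        rw [← ofReal_integral_eq_lintegral_ofReal hG (ae_of_all _ hG0),
          ENNReal.toReal_ofReal (integral_nonneg hG0), integral_const_mul]

/-- Let `D` be a stochastic process on a probability space whose
sample paths are a.s. nonnegative, nondecreasing, right-continuous, and tend to `∞`,
and let `E t = inf {s ≥ 0 : D s > t}` be its inverse. Then for `s₁,…,sₙ ≥ 0` and
`λ₁,…,λₙ > 0`,
`∫_{ℝⁿ≥0} exp(−Σᵢ λᵢ tᵢ) P[E tᵢ > sᵢ, i = 1,…,n] dt = (Πᵢ λᵢ)⁻¹ 𝔼[exp(−Σᵢ λᵢ D sᵢ)]`. -/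
theorem laplace_transform_tail_eq {Ω : Type*} [MeasurableSpace Ω]
    (P : Measure Ω) [IsProbabilityMeasure P]
    (D : ℝ → Ω → ℝ) (hmeas : ∀ s : ℝ, Measurable (D s))
    (hpath : ∀ᵐ ω ∂P, MonotoneOn (fun s => D s ω) (Ici 0) ∧
      (∀ s : ℝ, 0 ≤ s → 0 ≤ D s ω) ∧
      (∀ s : ℝ, 0 ≤ s → ContinuousWithinAt (fun u => D u ω) (Ici s) s) ∧
      Tendsto (fun s => D s ω) atTop atTop)
    (E : ℝ → Ω → ℝ) (hE : ∀ t ω, E t ω = sInf {s : ℝ | 0 ≤ s ∧ t < D s ω})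
    (n : ℕ) (s : Fin n → ℝ) (hs : ∀ i, 0 ≤ s i)
    (lam : Fin n → ℝ) (hlam : ∀ i, 0 < lam i) :
    ∫ t in {t : Fin n → ℝ | ∀ i, 0 ≤ t i},
        Real.exp (-∑ i, lam i * t i) * (P {ω | ∀ i, s i < E (t i) ω}).toReal
      = (∏ i, lam i)⁻¹ * ∫ ω, Real.exp (-∑ i, lam i * D (s i) ω) ∂P := by
  have hX : Measurable fun ω i => D (s i) ω := measurable_pi_lambda _ fun i => hmeas (s i)
  have hlower : ∀ t : Fin n → ℝ,
      P {ω | ∀ i, D (s i) ω < t i} ≤ P {ω | ∀ i, s i < E (t i) ω} := fun t => by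
    refine measure_mono_ae ?_
    filter_upwards [hpath] with ω hpathω hω i
    obtain ⟨hmono, -, hright, htop⟩ := hpathω
    rw [hE]
    exact lt_sInf_of_apply_lt hmono (hright _ (hs i)) htop (hs i) (hω i)
  have hupper : ∀ t : Fin n → ℝ,
      P {ω | ∀ i, s i < E (t i) ω} ≤ P {ω | ∀ i, D (s i) ω ≤ t i} := fun t =>
    measure_mono fun ω hω i => not_lt.1 fun hlt =>
      (hω i).not_ge (hE _ _ ▸ csInf_le ⟨0, fun _ hu => hu.1⟩ ⟨hs i, hlt⟩)
  have htail : ∀ᵐ t : Fin n → ℝ,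
      P {ω | ∀ i, s i < E (t i) ω} = P {ω | ∀ i, D (s i) ω < t i} := by
    filter_upwards [ae_measure_forall_le_eq_measure_forall_lt P hX] with t ht
    exact ((hupper t).trans ht.le).antisymm (hlower t)
  have hD0 : ∀ᵐ ω ∂P, ∀ i, 0 ≤ D (s i) ω := by
    filter_upwards [hpath] with ω hω i using hω.2.1 _ (hs i)
  rw [← integral_exp_neg_sum_mul_measure_forall_lt P hX hD0 hlam]
  refine integral_congr_ae (ae_restrict_of_ae ?_)
  filter_upwards [htail] with t ht
  rw [ht]
end

section
/- Let c ∈ ℝ and n ≥ 1, and let V : ℝⁿ≥0 → ℝ be a continuous function such that for every s = (s₁,…,sₙ) ∈ ℝⁿ≥0, the function τ ↦ V(s₁ + τ, …, sₙ + τ) is differentiable in τ ≥ 0 with derivative equal to −c · V(s₁ + τ, …, sₙ + τ), and such that V(s) = 0 whenever some coordinate sᵢ = 0. Then V is identically zero on ℝⁿ≥0. -/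
open Set

/- Along each characteristic `τ ↦ s + τ·(1,…,1)` the equation is the linear ODE `g' = -c g`, so by
Grönwall's inequality `V` vanishes on the whole characteristic once it vanishes at its foot. Every
point `s` of the orthant lies on the characteristic issued from `s - (min s)·(1,…,1)`, whose foot is
on the boundary. -/

theorem eq_zero_of_hasDerivWithinAt_Ici_smul_self {E : Type*} [NormedAddCommGroup E]
    [NormedSpace ℝ E] {g : ℝ → E} {c : ℝ}
    (hg : ∀ τ : ℝ, 0 ≤ τ → HasDerivWithinAt g (c • g τ) (Ici 0) τ) (h0 : g 0 = 0) :
    ∀ τ : ℝ, 0 ≤ τ → g τ = 0 := by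
  intro τ hτ
  exact eq_zero_of_abs_deriv_le_mul_abs_self_of_eq_zero_right (K := |c|)
    (fun x hx => (hg x hx.1).continuousWithinAt.mono fun y hy => hy.1)
    (fun x hx => (hg x hx.1).mono (Ici_subset_Ici.2 hx.1)) h0
    (fun x _ => (norm_smul c (g x)).le) τ ⟨hτ, le_rfl⟩

theorem pde_uniqueness_characteristics_general (n : ℕ) (hn : 0 < n) (c : ℝ)
    (V : (Fin n → ℝ) → ℝ)
    (hderiv : ∀ s : Fin n → ℝ, (∀ i, 0 ≤ s i) → ∀ τ : ℝ, 0 ≤ τ →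
      HasDerivWithinAt (fun u : ℝ => V (fun i => s i + u))
        (-c * V (fun i => s i + τ)) (Ici 0) τ)
    (hbdry : ∀ s : Fin n → ℝ, (∀ i, 0 ≤ s i) → (∃ i, s i = 0) → V s = 0) :
    ∀ s : Fin n → ℝ, (∀ i, 0 ≤ s i) → V s = 0 := by
  intro s hs
  have : Nonempty (Fin n) := ⟨⟨0, hn⟩⟩
  obtain ⟨i₀, hi₀⟩ := Finite.exists_min s
  set foot : Fin n → ℝ := fun i => s i - s i₀
  have hfoot : ∀ i, 0 ≤ foot i := fun i => sub_nonneg.2 (hi₀ i)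
  have hfoot_bdry : V foot = 0 := hbdry foot hfoot ⟨i₀, sub_self _⟩
  have hchar := eq_zero_of_hasDerivWithinAt_Ici_smul_self (hderiv foot hfoot)
    (by simpa using hfoot_bdry) (s i₀) (hs i₀)
  simpa [foot] using hchar

/-- Let `c ∈ ℝ`, `n ≥ 1`, and let `V : ℝⁿ≥0 → ℝ` be continuous,
such that for every `s` in the orthant the map `τ ↦ V (s + τ·(1,…,1))` is
differentiable for `τ ≥ 0` with derivative `−c · V (s + τ·(1,…,1))`, and `V`
vanishes whenever some coordinate is `0`.  Then `V ≡ 0` on the orthant. -/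
theorem pde_uniqueness_characteristics (n : ℕ) (hn : 0 < n) (c : ℝ)
    (V : (Fin n → ℝ) → ℝ)
    (hcont : ContinuousOn V {s : Fin n → ℝ | ∀ i, 0 ≤ s i})
    (hderiv : ∀ s : Fin n → ℝ, (∀ i, 0 ≤ s i) → ∀ τ : ℝ, 0 ≤ τ →
      HasDerivWithinAt (fun u : ℝ => V (fun i => s i + u))
        (-c * V (fun i => s i + τ)) (Ici 0) τ)
    (hbdry : ∀ s : Fin n → ℝ, (∀ i, 0 ≤ s i) → (∃ i, s i = 0) → V s = 0) :
    ∀ s : Fin n → ℝ, (∀ i, 0 ≤ s i) → V s = 0 :=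
  pde_uniqueness_characteristics_general n hn c V hderiv hbdry
end

section
/- Let D be a Lévy subordinator with Laplace exponent φ, not identically zero (so φ(x) > 0 for all x > 0, and D(s) → ∞ a.s.), and let E(t) = inf{ s ≥ 0 : D(s) > t } be its inverse. Then for every t ≥ 0 and every γ > 0, the moment 𝔼[E(t)^γ] is finite. -/
open Filter MeasureTheory ProbabilityTheory Set

/-- A Lévy subordinator `D` on a probability space `(Ω, P)` with Laplace exponent `φ`:
`D 0 = 0` a.s., sample paths a.s. nonnegative, nondecreasing and right-continuous,
independent and stationary increments, and `𝔼[exp(−λ D s)] = exp(−s φ(λ))` for all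
`λ, s ≥ 0` (with `φ` taking nonnegative values on `[0,∞)`). -/
structure IsLevySubordinator {Ω : Type*} [MeasurableSpace Ω] (P : Measure Ω)
    (D : ℝ → Ω → ℝ) (φ : ℝ → ℝ) : Prop where
  isProbability : IsProbabilityMeasure P
  measurable : ∀ s : ℝ, Measurable (D s)
  init : ∀ᵐ ω ∂P, D 0 ω = 0
  mono : ∀ᵐ ω ∂P, MonotoneOn (fun s => D s ω) (Ici 0)
  nonneg : ∀ᵐ ω ∂P, ∀ s : ℝ, 0 ≤ s → 0 ≤ D s ω
  rightCont : ∀ᵐ ω ∂P, ∀ s : ℝ, 0 ≤ s →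
    ContinuousWithinAt (fun u => D u ω) (Ici s) s
  indepIncrements : ∀ (n : ℕ) (s : ℕ → ℝ), s 0 = 0 → Monotone s →
    iIndepFun
      (fun i : Fin n => fun ω => D (s (i + 1)) ω - D (s i) ω) P
  stationaryIncrements : ∀ s t : ℝ, 0 ≤ s → s ≤ t →
    P.map (fun ω => D t ω - D s ω) = P.map (D (t - s))
  phi_nonneg : ∀ lam : ℝ, 0 ≤ lam → 0 ≤ φ lam
  laplace : ∀ lam s : ℝ, 0 ≤ lam → 0 ≤ s →
    ∫ ω, Real.exp (-(lam * D s ω)) ∂P = Real.exp (-(s * φ lam))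

/- Since `D n > t` forces `E t ≤ n`, the event `{E t > n}` lies in `{D n ≤ t}`, and the
Chernoff bound with the Laplace transform at `λ = 1` gives `P (D n ≤ t) ≤ e^t e^{-n φ(1)}`.
As `φ(1) > 0`, `E t` has a geometric tail, and a geometric tail makes every moment finite. -/

lemma summable_add_one_rpow_mul_geometric {γ r : ℝ} (hr₀ : 0 < r) (hr₁ : r < 1) :
    Summable fun n : ℕ => ((n : ℝ) + 1) ^ γ * r ^ n := by
  set K := ⌈γ⌉₊
  have hr : ‖r‖ < 1 := by rwa [Real.norm_of_nonneg hr₀.le]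
  have hshift : Summable fun n : ℕ => ((n + 1 : ℕ) : ℝ) ^ K * r ^ (n + 1) :=
    (summable_nat_add_iff (f := fun n : ℕ => (n : ℝ) ^ K * r ^ n) 1).mpr
      (summable_pow_mul_geometric_of_norm_lt_one K hr)
  have hK : Summable fun n : ℕ => ((n : ℝ) + 1) ^ K * r ^ n := by
    refine (hshift.mul_left r⁻¹).congr fun n => ?_
    rw [pow_succ, Nat.cast_succ]
    field_simp
  refine hK.of_nonneg_of_le (fun n => by positivity) fun n => ?_
  gcongr
  rw [← Real.rpow_natCast]
  exact Real.rpow_le_rpow_of_exponent_le (by linarith [n.cast_nonneg (α := ℝ)]) (Nat.le_ceil γ)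

lemma ofReal_rpow_le_tsum_ite {x γ : ℝ} (hx : 0 ≤ x) (hγ : 0 < γ) :
    ENNReal.ofReal (x ^ γ) ≤
      ∑' n : ℕ, if (n : ℝ) < x then ENNReal.ofReal (((n : ℝ) + 1) ^ γ) else 0 := by
  rcases hx.eq_or_lt with rfl | hx
  · simp [Real.zero_rpow hγ.ne']
  set m := ⌈x⌉₊ - 1
  have hm : (m : ℝ) + 1 = ⌈x⌉₊ := by
    have := Nat.ceil_pos.mpr hx
    push_cast [m, Nat.cast_sub this]
    ring
  have hmx : (m : ℝ) < x := by linarith [Nat.ceil_lt_add_one hx.le]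
  calc ENNReal.ofReal (x ^ γ)
      ≤ ENNReal.ofReal (((m : ℝ) + 1) ^ γ) := by
        gcongr
        exact hm ▸ Nat.le_ceil x
    _ = if (m : ℝ) < x then ENNReal.ofReal (((m : ℝ) + 1) ^ γ) else 0 := (if_pos hmx).symm
    _ ≤ _ := ENNReal.le_tsum m

section GeometricTail

variable {Ω : Type*} [MeasurableSpace Ω] {μ : Measure Ω}

lemma lintegral_ofReal_rpow_le_tsum {f : Ω → ℝ} {γ : ℝ} (hf : ∀ ω, 0 ≤ f ω) (hγ : 0 < γ)
    {B : ℕ → Set Ω} (hB : ∀ n, MeasurableSet (B n)) (hfB : ∀ (n : ℕ) ω, (n : ℝ) < f ω → ω ∈ B n) :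
    ∫⁻ ω, ENNReal.ofReal (f ω ^ γ) ∂μ ≤ ∑' n : ℕ, ENNReal.ofReal (((n : ℝ) + 1) ^ γ) * μ (B n) := by
  calc ∫⁻ ω, ENNReal.ofReal (f ω ^ γ) ∂μ
      ≤ ∫⁻ ω, ∑' n : ℕ, (B n).indicator (fun _ => ENNReal.ofReal (((n : ℝ) + 1) ^ γ)) ω ∂μ := by
        refine lintegral_mono fun ω => (ofReal_rpow_le_tsum_ite (hf ω) hγ).trans ?_
        refine ENNReal.tsum_le_tsum fun n => ?_
        split_ifs with hn
        · rw [indicator_of_mem (hfB n ω hn)]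
        · exact zero_le
    _ = _ := by
        rw [lintegral_tsum fun n => (measurable_const.indicator (hB n)).aemeasurable]
        simp only [lintegral_indicator_const (hB _)]

lemma lintegral_ofReal_rpow_lt_top_of_geometric_tail {f : Ω → ℝ} {γ C r : ℝ}
    (hf : ∀ ω, 0 ≤ f ω) (hγ : 0 < γ) (hr₀ : 0 < r) (hr₁ : r < 1)
    {B : ℕ → Set Ω} (hB : ∀ n, MeasurableSet (B n)) (hfB : ∀ (n : ℕ) ω, (n : ℝ) < f ω → ω ∈ B n)
    (hμB : ∀ n : ℕ, μ (B n) ≤ ENNReal.ofReal (C * r ^ n)) :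
    ∫⁻ ω, ENNReal.ofReal (f ω ^ γ) ∂μ < ⊤ := by
  have hsum := summable_add_one_rpow_mul_geometric (γ := γ) hr₀ hr₁
  calc ∫⁻ ω, ENNReal.ofReal (f ω ^ γ) ∂μ
      ≤ ∑' n : ℕ, ENNReal.ofReal (((n : ℝ) + 1) ^ γ) * μ (B n) :=
        lintegral_ofReal_rpow_le_tsum hf hγ hB hfB
    _ ≤ ∑' n : ℕ, ENNReal.ofReal C * ENNReal.ofReal (((n : ℝ) + 1) ^ γ * r ^ n) := by
        refine ENNReal.tsum_le_tsum fun n => ?_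
        rw [← ENNReal.ofReal_mul' (by positivity), mul_left_comm,
          ENNReal.ofReal_mul (by positivity)]
        gcongr
        exact hμB n
    _ = ENNReal.ofReal C * ENNReal.ofReal (∑' n : ℕ, ((n : ℝ) + 1) ^ γ * r ^ n) := by
        rw [ENNReal.tsum_mul_left, ENNReal.ofReal_tsum_of_nonneg (fun n => by positivity) hsum]
    _ < ⊤ := ENNReal.mul_lt_top ENNReal.ofReal_lt_top ENNReal.ofReal_lt_top

end GeometricTail

lemma le_of_lt_sInf_setOf_lt {g : ℝ → ℝ} {s t : ℝ} (hs : 0 ≤ s)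
    (h : s < sInf {u : ℝ | 0 ≤ u ∧ t < g u}) : g s ≤ t := by
  by_contra! hts
  exact (csInf_le (⟨0, fun _ hu => hu.1⟩ : BddBelow {u : ℝ | 0 ≤ u ∧ t < g u}) ⟨hs, hts⟩).not_gt h

namespace IsLevySubordinator

variable {Ω : Type*} [MeasurableSpace Ω] {P : Measure Ω} {D : ℝ → Ω → ℝ} {φ : ℝ → ℝ}

lemma integrable_exp_neg_mul (h : IsLevySubordinator P D φ) {lam s : ℝ} (hlam : 0 ≤ lam)
    (hs : 0 ≤ s) : Integrable (fun ω => Real.exp (-(lam * D s ω))) P := by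
  by_contra hint
  have := h.laplace lam s hlam hs
  rw [integral_undef hint] at this
  exact (Real.exp_pos _).ne' this.symm

lemma measure_le_le_exp_mul_exp (h : IsLevySubordinator P D φ) {s : ℝ} (hs : 0 ≤ s) (t : ℝ) :
    P {ω | D s ω ≤ t} ≤ ENNReal.ofReal (Real.exp t * Real.exp (-(s * φ 1))) := by
  have := h.isProbability
  have hint : Integrable (fun ω => Real.exp (-1 * D s ω)) P := by
    simpa using h.integrable_exp_neg_mul zero_le_one hs
  have hmgf : mgf (D s) P (-1) = Real.exp (-(s * φ 1)) := by
    simpa [mgf] using h.laplace 1 s zero_le_one hs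
  have := measure_le_le_exp_mul_mgf t (by norm_num) hint
  rw [hmgf, neg_neg, one_mul] at this
  rw [← ENNReal.ofReal_toReal (measure_ne_top P _)]
  exact ENNReal.ofReal_le_ofReal this

end IsLevySubordinator

theorem inverse_subordinator_moments_finite_general {Ω : Type*} [MeasurableSpace Ω]
    (P : Measure Ω) (D : ℝ → Ω → ℝ) (φ : ℝ → ℝ)
    (h : IsLevySubordinator P D φ)
    (hφ : ∀ lam : ℝ, 0 < lam → 0 < φ lam)
    (E : ℝ → Ω → ℝ) (hE : ∀ t ω, E t ω = sInf {u : ℝ | 0 ≤ u ∧ t < D u ω})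
    (t γ : ℝ) (hγ : 0 < γ) :
    ∫⁻ ω, ENNReal.ofReal (E t ω ^ γ) ∂P < ⊤ := by
  have hE_nonneg : ∀ ω, 0 ≤ E t ω := fun ω => hE t ω ▸ Real.sInf_nonneg fun _ hu => hu.1
  have hE_tail : ∀ (n : ℕ) ω, (n : ℝ) < E t ω → D n ω ≤ t := fun n ω hn =>
    le_of_lt_sInf_setOf_lt n.cast_nonneg (hE t ω ▸ hn)
  have hr : Real.exp (-φ 1) < 1 := Real.exp_lt_one_iff.mpr (neg_neg_of_pos (hφ 1 one_pos))
  have hD_tail :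
      ∀ n : ℕ, P {ω | D n ω ≤ t} ≤ ENNReal.ofReal (Real.exp t * Real.exp (-φ 1) ^ n) := by
    intro n
    rw [← Real.exp_nat_mul, mul_neg]
    exact h.measure_le_le_exp_mul_exp n.cast_nonneg t
  exact lintegral_ofReal_rpow_lt_top_of_geometric_tail (B := fun n : ℕ => {ω | D n ω ≤ t})
    hE_nonneg hγ (Real.exp_pos _) hr (fun n => h.measurable n measurableSet_Iic) hE_tail hD_tail

/-- For a Lévy subordinator `D` with Laplace exponent `φ` not
identically zero (`φ(x) > 0` for `x > 0`) and inverse `E t = inf {s ≥ 0 : D s > t}`,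
all moments `𝔼[(E t)^γ]`, `γ > 0`, are finite. -/
theorem inverse_subordinator_moments_finite {Ω : Type*} [MeasurableSpace Ω]
    (P : Measure Ω) (D : ℝ → Ω → ℝ) (φ : ℝ → ℝ)
    (h : IsLevySubordinator P D φ)
    (hφ : ∀ lam : ℝ, 0 < lam → 0 < φ lam)
    (E : ℝ → Ω → ℝ) (hE : ∀ t ω, E t ω = sInf {u : ℝ | 0 ≤ u ∧ t < D u ω})
    (t γ : ℝ) (ht : 0 ≤ t) (hγ : 0 < γ) :
    ∫⁻ ω, ENNReal.ofReal (E t ω ^ γ) ∂P < ⊤ :=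
  inverse_subordinator_moments_finite_general P D φ h hφ E hE t γ hγ
end

section
/- Let D be a Lévy subordinator with Laplace exponent φ, and suppose 0 < 𝔼[D(1)] < ∞. Let E(t) = inf{ s ≥ 0 : D(s) > t } be the inverse subordinator and U(t) = 𝔼[E(t)]. Then U(t)/t → 1/𝔼[D(1)] as t → ∞ (the renewal theorem: U(t) ∼ t/𝔼[D(1)]). -/
/-!
Sample the subordinator at integer times: `D n` is a random walk with i.i.d. nonnegative
increments of mean `m = 𝔼[D 1]`, so `D n / n → m` a.s. by the strong law of large numbers.
The first index `ν t` with `t < D (ν t)` then satisfies `ν t / t → 1 / m` a.s., and monotone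
paths give `ν t - 1 ≤ E t ≤ ν t`, so it suffices to show `𝔼[ν t] / t → 1 / m`.
Fatou's lemma gives the lower bound. For the upper bound, truncate the increments at a level `b`:
Wald's identity for the truncated walk gives `𝔼[min b (D 1)] · 𝔼[ν t] ≤ t + b`, and
`𝔼[min b (D 1)] ↑ m` as `b → ∞` by monotone convergence.
-/

open Filter MeasureTheory ProbabilityTheory Set
open scoped ENNReal Topology

-- Both are `0`, the junk value of `sInf ∅`, when `f` never exceeds `t`.
noncomputable def firstExceedance (f : ℕ → ℝ) (t : ℝ) : ℕ := sInf {n | t < f n}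

noncomputable def exceedanceTime (f : ℝ → ℝ) (t : ℝ) : ℝ := sInf {u | 0 ≤ u ∧ t < f u}

section FirstExceedance

variable {f : ℕ → ℝ} {t : ℝ}

theorem lt_apply_firstExceedance (hf : ∃ n, t < f n) : t < f (firstExceedance f t) :=
  Nat.sInf_mem hf

theorem apply_le_of_lt_firstExceedance {k : ℕ} (hk : k < firstExceedance f t) : f k ≤ t :=
  not_lt.1 (Nat.notMem_of_lt_sInf hk)

theorem tendsto_atTop_of_tendsto_div_natCast {m : ℝ} (hm : 0 < m)
    (hlim : Tendsto (fun n : ℕ => f n / n) atTop (𝓝 m)) : Tendsto f atTop atTop := by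
  refine (hlim.pos_mul_atTop hm tendsto_natCast_atTop_atTop).congr' ?_
  filter_upwards [eventually_ne_atTop 0] with n hn
  field_simp

theorem tendsto_firstExceedance_div {m : ℝ} (hm : 0 < m) (hmono : Monotone f)
    (hlim : Tendsto (fun n : ℕ => f n / n) atTop (𝓝 m)) :
    Tendsto (fun t => (firstExceedance f t : ℝ) / t) atTop (𝓝 m⁻¹) := by
  set ν := firstExceedance f
  have hex : ∀ t, ∃ n, t < f n := fun t =>
    ((tendsto_atTop_of_tendsto_div_natCast hm hlim).eventually_gt_atTop t).exists
  have hν : Tendsto ν atTop atTop := tendsto_atTop_atTop.2 fun k =>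
    ⟨f k, fun t ht => not_lt.1 fun hlt => (lt_apply_firstExceedance (hex t)).not_ge
      ((hmono hlt.le).trans ht)⟩
  have hprev : Tendsto (fun n : ℕ => f (n - 1) / n) atTop (𝓝 m) := by
    rw [← tendsto_add_atTop_iff_nat 1]
    refine (mul_one m ▸ hlim.mul (tendsto_natCast_div_add_atTop (1 : ℝ))).congr' ?_
    filter_upwards [eventually_ne_atTop 0] with n hn
    simp only [add_tsub_cancel_right, Nat.cast_add, Nat.cast_one]
    field_simp
  have hratio : Tendsto (fun t => t / ν t) atTop (𝓝 m) := by
    refine tendsto_of_tendsto_of_tendsto_of_le_of_le' (hprev.comp hν) (hlim.comp hν) ?_ ?_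
    all_goals filter_upwards [hν.eventually_gt_atTop 0] with t ht
    · exact div_le_div_of_nonneg_right (apply_le_of_lt_firstExceedance (Nat.sub_one_lt_of_lt ht))
        (Nat.cast_nonneg _)
    · exact div_le_div_of_nonneg_right (lt_apply_firstExceedance (hex t)).le (Nat.cast_nonneg _)
  simpa only [inv_div] using hratio.inv₀ hm.ne'

end FirstExceedance

section ExceedanceTime

variable {f : ℝ → ℝ} {t : ℝ}

theorem exceedanceTime_le {u : ℝ} (hu : 0 ≤ u) (htu : t < f u) : exceedanceTime f t ≤ u :=
  csInf_le ⟨0, fun _ hv => hv.1⟩ ⟨hu, htu⟩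

theorem exceedanceTime_le_firstExceedance (hex : ∃ n : ℕ, t < f n) :
    exceedanceTime f t ≤ firstExceedance (fun n => f n) t :=
  exceedanceTime_le (Nat.cast_nonneg _) (lt_apply_firstExceedance hex)

theorem firstExceedance_sub_one_le_exceedanceTime (hf : MonotoneOn f (Ici 0))
    (hex : ∃ n : ℕ, t < f n) :
    (firstExceedance (fun n => f n) t : ℝ) - 1 ≤ exceedanceTime f t := by
  obtain ⟨n, hn⟩ := hex
  refine le_csInf ⟨n, Nat.cast_nonneg n, hn⟩ fun u ⟨hu, htu⟩ => ?_
  rcases Nat.eq_zero_or_pos (firstExceedance (fun n => f n) t) with h0 | hpos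
  · rw [h0, Nat.cast_zero]
    linarith
  · by_contra! hlt
    have hprev := apply_le_of_lt_firstExceedance (Nat.sub_one_lt_of_lt hpos)
    have hcast : ((firstExceedance (fun n => f n) t - 1 : ℕ) : ℝ) =
        (firstExceedance (fun n => f n) t : ℝ) - 1 := by
      rw [Nat.cast_sub hpos, Nat.cast_one]
    rw [← hcast] at hlt
    exact htu.not_ge ((hf hu (mem_Ici.2 (Nat.cast_nonneg _)) hlt.le).trans hprev)

theorem exceedanceTime_lt_iff (hf : MonotoneOn f (Ici 0)) (hex : ∃ u, 0 ≤ u ∧ t < f u) {s : ℝ} :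
    exceedanceTime f t < s ↔ ∃ q : ℚ, 0 ≤ (q : ℝ) ∧ (q : ℝ) < s ∧ t < f q := by
  constructor
  · intro hs
    obtain ⟨u, ⟨hu, htu⟩, hus⟩ := exists_lt_of_csInf_lt hex hs
    obtain ⟨q, huq, hqs⟩ := exists_rat_btwn hus
    exact ⟨q, hu.trans huq.le, hqs, htu.trans_le (hf hu (hu.trans huq.le) huq.le)⟩
  · rintro ⟨q, hq, hqs, htq⟩
    exact (exceedanceTime_le hq htq).trans_lt hqs

end ExceedanceTime

theorem tendsto_div_of_abs_sub_le {U N : ℝ → ℝ} {C L : ℝ} (hUN : ∀ᶠ t in atTop, |U t - N t| ≤ C)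
    (hN : Tendsto (fun t => N t / t) atTop (𝓝 L)) : Tendsto (fun t => U t / t) atTop (𝓝 L) := by
  have hdiff : Tendsto (fun t => (U t - N t) / t) atTop (𝓝 0) := by
    refine squeeze_zero_norm' ?_ ((tendsto_const_nhds (x := C)).div_atTop tendsto_id)
    filter_upwards [hUN, eventually_gt_atTop 0] with t ht htpos
    rw [Real.norm_eq_abs, abs_div, abs_of_pos htpos, id]
    exact div_le_div_of_nonneg_right ht htpos.le
  simpa [← add_div] using hN.add hdiff

theorem tendsto_div_of_mul_le_add {N : ℝ → ℝ} {m : ℝ} (hm : 0 < m)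
    (hupper : ∀ r, 0 < r → r < m → ∃ c, ∀ᶠ t in atTop, r * N t ≤ t + c)
    (hlower : ∀ a < m⁻¹, ∀ᶠ t in atTop, a < N t / t) :
    Tendsto (fun t => N t / t) atTop (𝓝 m⁻¹) := by
  refine tendsto_order.2 ⟨hlower, fun a ha => ?_⟩
  have ha₀ : 0 < a := (inv_pos.2 hm).trans ha
  obtain ⟨r, har, hrm⟩ := exists_between ((inv_lt_comm₀ hm ha₀).1 ha)
  have hr : 0 < r := (inv_pos.2 ha₀).trans har
  obtain ⟨c, hc⟩ := hupper r hr hrm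
  have hlim : Tendsto (fun t => r⁻¹ + r⁻¹ * c / t) atTop (𝓝 (r⁻¹ + 0)) :=
    tendsto_const_nhds.add (tendsto_const_nhds.div_atTop tendsto_id)
  filter_upwards [hc, hlim.eventually_lt_const (by simpa using (inv_lt_comm₀ ha₀ hr).1 har),
    eventually_gt_atTop 0] with t hNt hlt ht
  calc N t / t ≤ (t + c) / r / t := by gcongr; rwa [le_div_iff₀' hr]
    _ = r⁻¹ + r⁻¹ * c / t := by field_simp
    _ < a := hlt

theorem sum_range_indicator_mul_le {y : ℕ → ℝ} {b t : ℝ} (hy : ∀ k, y k ∈ Icc 0 b) (ht : 0 ≤ t)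
    (n : ℕ) :
    ∑ k ∈ Finset.range n, (Iic t).indicator 1 (∑ j ∈ Finset.range k, y j) * ENNReal.ofReal (y k)
      ≤ ENNReal.ofReal (t + b) := by
  set S : ℕ → ℝ := fun k => ∑ j ∈ Finset.range k, y j
  set A : ℕ → ℝ := fun n => ∑ k ∈ Finset.range n, if S k ≤ t then y k else 0
  -- the accepted terms form an initial segment whose sum overshoots `t` by at most one term
  have key : ∀ n, A n ≤ S n ∧ A n ≤ t + b := by
    intro n
    induction n with
    | zero => simpa [A, S] using ht.trans (le_add_of_nonneg_right ((hy 0).1.trans (hy 0).2))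
    | succ n ih =>
      simp only [A, S, Finset.sum_range_succ] at ih ⊢
      have := hy n
      split_ifs <;> constructor <;> linarith [this.1, this.2]
  calc _ = ENNReal.ofReal (A n) := by
        rw [ENNReal.ofReal_sum_of_nonneg fun k _ => by split_ifs <;> simp [(hy k).1]]
        refine Finset.sum_congr rfl fun k _ => ?_
        by_cases hk : S k ≤ t <;> simp [S, hk]
    _ ≤ ENNReal.ofReal (t + b) := ENNReal.ofReal_le_ofReal (key n).2

section Measure

variable {Ω : Type*} [MeasurableSpace Ω] {μ : Measure Ω}

theorem measurable_nat_sInf {p : Ω → ℕ → Prop} (hp : ∀ n, MeasurableSet {ω | p ω n}) :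
    Measurable fun ω => sInf {n | p ω n} := by
  set A := {ω | ∃ n, p ω n}
  -- off `A` the infimum is the junk value `0`, which is also the first `n` with `ω ∉ A`
  have hq : ∀ ω, ∃ n, p ω n ∨ ω ∉ A := fun ω =>
    (em (ω ∈ A)).elim (fun hω => hω.imp fun _ => Or.inl) fun hω => ⟨0, Or.inr hω⟩
  have heq : ∀ ω, sInf {n | p ω n} = sInf {n | p ω n ∨ ω ∉ A} := by
    intro ω
    by_cases hω : ω ∈ A
    · simp [hω]
    · have hempty : {n | p ω n} = ∅ := eq_empty_of_forall_notMem fun n hn => hω ⟨n, hn⟩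
      simp [hω, hempty]
  have hfind : (fun ω => sInf {n | p ω n}) = fun ω => @Nat.find _ (Classical.decPred _) (hq ω) :=
    funext fun ω => (heq ω).trans (Nat.sInf_def (hq ω))
  rw [hfind]
  refine @measurable_find _ _ _ (fun _ => Classical.decPred _) hq
    fun n => (hp n).union (MeasurableSet.compl ?_)
  simpa only [A, ofPred_exists] using MeasurableSet.iUnion hp

theorem measurable_firstExceedance {X : ℕ → Ω → ℝ} (hX : ∀ n, Measurable (X n)) (t : ℝ) :
    Measurable fun ω => firstExceedance (fun n => X n ω) t :=
  measurable_nat_sInf fun n => measurableSet_lt measurable_const (hX n)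

theorem lintegral_natCast_eq_tsum_measure_lt {N : Ω → ℕ} (hN : Measurable N) :
    ∫⁻ ω, (N ω : ℝ≥0∞) ∂μ = ∑' k : ℕ, μ {ω | k < N ω} := by
  have hset : ∀ k : ℕ, MeasurableSet {ω | k < N ω} := fun k => measurableSet_lt measurable_const hN
  have hcount : ∀ ω, (N ω : ℝ≥0∞) = ∑' k : ℕ, {ω | k < N ω}.indicator 1 ω := by
    intro ω
    rw [tsum_eq_sum (s := Finset.range (N ω)) fun k hk => by simpa using hk]
    simp [indicator_apply, Finset.filter_true_of_mem fun k hk => Finset.mem_range.1 hk]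
  simp_rw [hcount]
  rw [lintegral_tsum fun k => (measurable_one.indicator (hset k)).aemeasurable]
  simp_rw [lintegral_indicator_one (hset _)]

theorem eventually_lt_integral_of_ae_tendsto [IsProbabilityMeasure μ] {ι : Type*} {l : Filter ι}
    [l.IsCountablyGenerated] [l.NeBot] {f : ι → Ω → ℝ} {a : ℝ}
    (hmeas : ∀ i, AEMeasurable (f i) μ) (hint : ∀ᶠ i in l, Integrable (f i) μ)
    (hnonneg : ∀ᶠ i in l, 0 ≤ᵐ[μ] f i) (hlim : ∀ᵐ ω ∂μ, Tendsto (fun i => f i ω) l (𝓝 a))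
    {a' : ℝ} (ha' : a' < a) : ∀ᶠ i in l, a' < ∫ ω, f i ω ∂μ := by
  rcases lt_or_ge a' 0 with hneg | hnonneg'
  · filter_upwards [hnonneg] with i hi using hneg.trans_le (integral_nonneg_of_ae hi)
  have hfatou : ENNReal.ofReal a ≤ liminf (fun i => ENNReal.ofReal (∫ ω, f i ω ∂μ)) l := by
    calc ENNReal.ofReal a = ∫⁻ ω, liminf (fun i => ENNReal.ofReal (f i ω)) l ∂μ := by
          rw [lintegral_congr_ae (hlim.mono fun ω hω =>
            (ENNReal.tendsto_ofReal hω).liminf_eq)]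
          simp
      _ ≤ liminf (fun i => ∫⁻ ω, ENNReal.ofReal (f i ω) ∂μ) l :=
          lintegral_liminf_le' fun i => (hmeas i).ennreal_ofReal
      _ = liminf (fun i => ENNReal.ofReal (∫ ω, f i ω ∂μ)) l := by
          refine liminf_congr ?_
          filter_upwards [hint, hnonneg] with i hi hi'
          exact (ofReal_integral_eq_lintegral_ofReal hi hi').symm
  filter_upwards [eventually_lt_of_lt_liminf
    (((ENNReal.ofReal_lt_ofReal_iff (hnonneg'.trans_lt ha')).2 ha').trans_le hfatou)] with i hi
  exact (ENNReal.ofReal_lt_ofReal_iff'.1 hi).1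

theorem iSup_lintegral_ofReal_min_natCast {X : Ω → ℝ} (hX : AEMeasurable X μ) :
    ⨆ b : ℕ, ∫⁻ ω, ENNReal.ofReal (min b (X ω)) ∂μ = ∫⁻ ω, ENNReal.ofReal (X ω) ∂μ := by
  rw [← lintegral_iSup' (fun b => (aemeasurable_const.min hX).ennreal_ofReal)
    (ae_of_all _ fun ω b b' hbb' => ENNReal.ofReal_le_ofReal (min_le_min_right _ (by gcongr)))]
  refine lintegral_congr fun ω => le_antisymm
    (iSup_le fun b => ENNReal.ofReal_le_ofReal (min_le_right _ _)) ?_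
  obtain ⟨b, hb⟩ := exists_nat_ge (X ω)
  exact le_iSup_of_le b (by rw [min_eq_right hb])

theorem iIndepFun_of_forall_fin {β : Type*} [MeasurableSpace β] {X : ℕ → Ω → β}
    (hX : ∀ n, iIndepFun (fun i : Fin n => X i) μ) : iIndepFun X μ := by
  rw [iIndepFun_iff_finset]
  intro s
  obtain ⟨n, hn⟩ := s.exists_nat_subset_range
  exact (hX n).precomp (g := fun i : s => ⟨i, Finset.mem_range.1 (hn i.2)⟩)
    fun i j hij => Subtype.ext (congrArg Fin.val hij)

/-- Wald's identity, as an inequality, for the first passage of the partial sums above `t`. -/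
theorem lintegral_mul_tsum_measure_sum_le [IsProbabilityMeasure μ] {Y : ℕ → Ω → ℝ} {b t : ℝ}
    (hind : iIndepFun Y μ) (hmeas : ∀ k, Measurable (Y k))
    (hmean : ∀ k, ∫⁻ ω, ENNReal.ofReal (Y k ω) ∂μ = ∫⁻ ω, ENNReal.ofReal (Y 0 ω) ∂μ)
    (hY : ∀ᵐ ω ∂μ, ∀ k, Y k ω ∈ Icc 0 b) (ht : 0 ≤ t) :
    (∫⁻ ω, ENNReal.ofReal (Y 0 ω) ∂μ) * ∑' k, μ {ω | ∑ j ∈ Finset.range k, Y j ω ≤ t}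
      ≤ ENNReal.ofReal (t + b) := by
  set g : ℝ → ℝ≥0∞ := (Iic t).indicator 1
  have hg : Measurable g := measurable_one.indicator measurableSet_Iic
  have hterm : ∀ k, ∫⁻ ω, g (∑ j ∈ Finset.range k, Y j ω) * ENNReal.ofReal (Y k ω) ∂μ =
      μ {ω | ∑ j ∈ Finset.range k, Y j ω ≤ t} * ∫⁻ ω, ENNReal.ofReal (Y 0 ω) ∂μ := by
    intro k
    have hind_k := (hind.indepFun_sum_range_succ hmeas k).comp hg ENNReal.measurable_ofReal
    have hprod := lintegral_mul_eq_lintegral_mul_lintegral_of_indepFun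
      (hg.comp (by fun_prop)) (ENNReal.measurable_ofReal.comp (hmeas k)) hind_k
    simp only [Pi.mul_apply, Function.comp_apply, Finset.sum_apply] at hprod
    rw [hprod, hmean k]
    congr 1
    exact lintegral_indicator_one (measurableSet_le (by fun_prop) measurable_const)
  calc (∫⁻ ω, ENNReal.ofReal (Y 0 ω) ∂μ) * ∑' k, μ {ω | ∑ j ∈ Finset.range k, Y j ω ≤ t}
      = ∑' k, ∫⁻ ω, g (∑ j ∈ Finset.range k, Y j ω) * ENNReal.ofReal (Y k ω) ∂μ := by
        rw [← ENNReal.tsum_mul_left]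
        simp_rw [hterm, mul_comm]
    _ = ∫⁻ ω, ∑' k, g (∑ j ∈ Finset.range k, Y j ω) * ENNReal.ofReal (Y k ω) ∂μ :=
        (lintegral_tsum fun k => by fun_prop).symm
    _ ≤ ∫⁻ _, ENNReal.ofReal (t + b) ∂μ := lintegral_mono_ae <| hY.mono fun ω hω =>
        ENNReal.tsum_le_of_sum_range_le (sum_range_indicator_mul_le hω ht)
    _ = ENNReal.ofReal (t + b) := by simp

end Measure

namespace IsLevySubordinator

variable {Ω : Type*} [MeasurableSpace Ω] {P : Measure Ω} {D : ℝ → Ω → ℝ} {φ : ℝ → ℝ}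

def increment (D : ℝ → Ω → ℝ) (n : ℕ) : Ω → ℝ := fun ω => D (n + 1) ω - D n ω

theorem measurable_increment (h : IsLevySubordinator P D φ) (n : ℕ) :
    Measurable (increment D n) :=
  (h.measurable _).sub (h.measurable _)

theorem iIndepFun_increment (h : IsLevySubordinator P D φ) : iIndepFun (increment D) P :=
  iIndepFun_of_forall_fin fun n => by
    have := h.indepIncrements n (fun k => (k : ℝ)) Nat.cast_zero Nat.mono_cast
    simp only [Nat.cast_add, Nat.cast_one] at this
    exact this

theorem identDistrib_increment (h : IsLevySubordinator P D φ) (n : ℕ) :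
    IdentDistrib (increment D n) (D 1) P P where
  aemeasurable_fst := (h.measurable_increment n).aemeasurable
  aemeasurable_snd := (h.measurable 1).aemeasurable
  map_eq := by
    have := h.stationaryIncrements n (n + 1) (Nat.cast_nonneg n) (by linarith)
    rwa [add_sub_cancel_left] at this

theorem sum_increment (h : IsLevySubordinator P D φ) :
    ∀ᵐ ω ∂P, ∀ k : ℕ, ∑ i ∈ Finset.range k, increment D i ω = D k ω := by
  filter_upwards [h.init] with ω h0 k
  simpa [increment, h0] using Finset.sum_range_sub (fun i : ℕ => D i ω) k

theorem monotone_natCast (h : IsLevySubordinator P D φ) :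
    ∀ᵐ ω ∂P, Monotone fun n : ℕ => D n ω := by
  filter_upwards [h.mono] with ω hω a b hab
  exact hω (mem_Ici.2 (Nat.cast_nonneg a)) (mem_Ici.2 (Nat.cast_nonneg b)) (Nat.cast_le.2 hab)

theorem increment_nonneg (h : IsLevySubordinator P D φ) :
    ∀ᵐ ω ∂P, ∀ n, 0 ≤ increment D n ω := by
  filter_upwards [h.monotone_natCast] with ω hω n
  simpa [increment] using hω n.le_succ

theorem ae_tendsto_div_natCast (h : IsLevySubordinator P D φ) (hInt : Integrable (D 1) P) :
    ∀ᵐ ω ∂P, Tendsto (fun n : ℕ => D n ω / n) atTop (𝓝 (∫ ω, D 1 ω ∂P)) := by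
  have hslln := strong_law_ae_real (increment D)
    ((h.identDistrib_increment 0).integrable_iff.2 hInt)
    (fun i j hij => h.iIndepFun_increment.indepFun hij)
    (fun n => (h.identDistrib_increment n).trans (h.identDistrib_increment 0).symm)
  rw [(h.identDistrib_increment 0).integral_eq] at hslln
  filter_upwards [hslln, h.sum_increment] with ω hω hsum
  simpa only [hsum] using hω

theorem lintegral_min_mul_lintegral_firstExceedance_le (h : IsLevySubordinator P D φ) (b : ℕ)
    {t : ℝ} (ht : 0 ≤ t) :
    (∫⁻ ω, ENNReal.ofReal (min b (D 1 ω)) ∂P) *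
        ∫⁻ ω, (firstExceedance (fun n : ℕ => D n ω) t : ℝ≥0∞) ∂P
      ≤ ENNReal.ofReal (t + b) := by
  have := h.isProbability
  set Y : ℕ → Ω → ℝ := fun k ω => min (b : ℝ) (increment D k ω)
  have hYmeas : ∀ k, Measurable (Y k) := fun k => measurable_const.min (h.measurable_increment k)
  have hmean : ∀ k, ∫⁻ ω, ENNReal.ofReal (Y k ω) ∂P = ∫⁻ ω, ENNReal.ofReal (min b (D 1 ω)) ∂P :=
    fun k => ((h.identDistrib_increment k).comp
      (ENNReal.measurable_ofReal.comp (measurable_const.min measurable_id))).lintegral_eq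
  have hY : ∀ᵐ ω ∂P, ∀ k, Y k ω ∈ Icc 0 (b : ℝ) := by
    filter_upwards [h.increment_nonneg] with ω hω k
    exact ⟨le_min (Nat.cast_nonneg b) (hω k), min_le_left _ _⟩
  have hwald : (∫⁻ ω, ENNReal.ofReal (Y 0 ω) ∂P) *
      ∑' k, P {ω | ∑ j ∈ Finset.range k, Y j ω ≤ t} ≤ ENNReal.ofReal (t + b) :=
    lintegral_mul_tsum_measure_sum_le
    (h.iIndepFun_increment.comp (fun _ => min (b : ℝ)) fun _ => measurable_const.min measurable_id)
    hYmeas (fun k => (hmean k).trans (hmean 0).symm) hY ht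
  rw [hmean 0] at hwald
  refine le_trans (mul_le_mul_right ?_ _) hwald
  rw [lintegral_natCast_eq_tsum_measure_lt (measurable_firstExceedance (fun n => h.measurable n) t)]
  refine ENNReal.tsum_le_tsum fun k => measure_mono_ae ?_
  filter_upwards [h.sum_increment] with ω hsum hk
  calc ∑ j ∈ Finset.range k, Y j ω ≤ ∑ j ∈ Finset.range k, increment D j ω :=
        Finset.sum_le_sum fun j _ => min_le_right _ _
    _ = D k ω := hsum k
    _ ≤ t := apply_le_of_lt_firstExceedance hk

variable (h : IsLevySubordinator P D φ) (hInt : Integrable (D 1) P) (hpos : 0 < ∫ ω, D 1 ω ∂P)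
include h hInt hpos

theorem ae_forall_exists_lt : ∀ᵐ ω ∂P, ∀ t, ∃ n : ℕ, t < D n ω := by
  filter_upwards [h.ae_tendsto_div_natCast hInt] with ω hω t
  exact ((tendsto_atTop_of_tendsto_div_natCast hpos hω).eventually_gt_atTop t).exists

theorem ae_tendsto_firstExceedance_div :
    ∀ᵐ ω ∂P, Tendsto (fun t => (firstExceedance (fun n : ℕ => D n ω) t : ℝ) / t) atTop
      (𝓝 (∫ ω, D 1 ω ∂P)⁻¹) := by
  filter_upwards [h.ae_tendsto_div_natCast hInt, h.monotone_natCast] with ω hlim hmono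
  exact tendsto_firstExceedance_div hpos hmono hlim

theorem exists_lintegral_firstExceedance_le {r : ℝ} (hr : r < ∫ ω, D 1 ω ∂P) :
    ∃ c : ℕ, ∀ t, 0 ≤ t → ENNReal.ofReal r *
      ∫⁻ ω, (firstExceedance (fun n : ℕ => D n ω) t : ℝ≥0∞) ∂P ≤ ENNReal.ofReal (t + c) := by
  have hsup := iSup_lintegral_ofReal_min_natCast (h.measurable 1).aemeasurable (μ := P)
  rw [← ofReal_integral_eq_lintegral_ofReal hInt
    (h.nonneg.mono fun ω hω => hω 1 zero_le_one)] at hsup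
  obtain ⟨c, hc⟩ := lt_iSup_iff.1 (hsup ▸ (ENNReal.ofReal_lt_ofReal_iff hpos).2 hr)
  exact ⟨c, fun t ht =>
    (mul_le_mul_left hc.le _).trans (h.lintegral_min_mul_lintegral_firstExceedance_le c ht)⟩

theorem integrable_firstExceedance {t : ℝ} (ht : 0 ≤ t) :
    Integrable (fun ω => (firstExceedance (fun n : ℕ => D n ω) t : ℝ)) P := by
  obtain ⟨c, hc⟩ := h.exists_lintegral_firstExceedance_le hInt hpos (half_lt_self hpos)
  have hfin : ∫⁻ ω, (firstExceedance (fun n : ℕ => D n ω) t : ℝ≥0∞) ∂P ≠ ⊤ := by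
    intro htop
    have := hc t ht
    rw [htop, ENNReal.mul_top (ENNReal.ofReal_pos.2 (half_pos hpos)).ne'] at this
    exact ENNReal.ofReal_ne_top (top_le_iff.1 this)
  have hmeas := measurable_firstExceedance (fun n => h.measurable n) t
  simpa using
    integrable_toReal_of_lintegral_ne_top (measurable_from_top.comp hmeas).aemeasurable hfin

theorem exists_mul_integral_firstExceedance_le {r : ℝ} (hr₀ : 0 < r) (hr : r < ∫ ω, D 1 ω ∂P) :
    ∃ c : ℝ, ∀ t, 0 ≤ t → r * ∫ ω, (firstExceedance (fun n : ℕ => D n ω) t : ℝ) ∂P ≤ t + c := by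
  obtain ⟨c, hc⟩ := h.exists_lintegral_firstExceedance_le hInt hpos hr
  refine ⟨c, fun t ht => ?_⟩
  rw [integral_eq_lintegral_of_nonneg_ae (ae_of_all _ fun ω => Nat.cast_nonneg _)
    (h.integrable_firstExceedance hInt hpos ht).aestronglyMeasurable]
  simp only [ENNReal.ofReal_natCast]
  have := ENNReal.toReal_mono ENNReal.ofReal_ne_top (hc t ht)
  rwa [ENNReal.toReal_mul, ENNReal.toReal_ofReal hr₀.le, ENNReal.toReal_ofReal (by positivity)]
    at this

theorem eventually_lt_integral_firstExceedance_div {a : ℝ} (ha : a < (∫ ω, D 1 ω ∂P)⁻¹) :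
    ∀ᶠ t in atTop, a < (∫ ω, (firstExceedance (fun n : ℕ => D n ω) t : ℝ) ∂P) / t := by
  have := h.isProbability
  have hmeas : ∀ t, Measurable fun ω => (firstExceedance (fun n : ℕ => D n ω) t : ℝ) :=
    fun t => measurable_from_top.comp (measurable_firstExceedance (fun n => h.measurable n) t)
  simpa only [integral_div] using eventually_lt_integral_of_ae_tendsto
    (f := fun t ω => (firstExceedance (fun n : ℕ => D n ω) t : ℝ) / t)
    (fun t => ((hmeas t).div_const t).aemeasurable)
    ((eventually_ge_atTop 0).mono fun t ht =>
      (h.integrable_firstExceedance hInt hpos ht).div_const t)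
    ((eventually_ge_atTop 0).mono fun t ht =>
      ae_of_all _ fun ω => div_nonneg (Nat.cast_nonneg _) ht)
    (h.ae_tendsto_firstExceedance_div hInt hpos) ha

theorem aestronglyMeasurable_exceedanceTime (t : ℝ) :
    AEStronglyMeasurable (fun ω => exceedanceTime (fun u => D u ω) t) P := by
  refine (NullMeasurable.aemeasurable (measurable_of_Iio fun s => ?_)).aestronglyMeasurable
  have hmeas : MeasurableSet {ω | ∃ q : ℚ, 0 ≤ (q : ℝ) ∧ (q : ℝ) < s ∧ t < D q ω} := by
    simp only [ofPred_exists, ofPred_and]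
    exact MeasurableSet.iUnion fun q => (MeasurableSet.const _).inter
      ((MeasurableSet.const _).inter (measurableSet_lt measurable_const (h.measurable _)))
  refine hmeas.nullMeasurableSet.congr (eventuallyEq_set.2 ?_)
  filter_upwards [h.mono, h.ae_forall_exists_lt hInt hpos] with ω hmono hex
  obtain ⟨n, hn⟩ := hex t
  exact (exceedanceTime_lt_iff hmono ⟨n, Nat.cast_nonneg n, hn⟩).symm

theorem abs_integral_exceedanceTime_sub_le {t : ℝ} (ht : 0 ≤ t) :
    |∫ ω, exceedanceTime (fun u => D u ω) t ∂P -
      ∫ ω, (firstExceedance (fun n : ℕ => D n ω) t : ℝ) ∂P| ≤ 1 := by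
  have := h.isProbability
  have hν := h.integrable_firstExceedance hInt hpos ht
  have hclose : ∀ᵐ ω ∂P, |exceedanceTime (fun u => D u ω) t -
      firstExceedance (fun n : ℕ => D n ω) t| ≤ 1 := by
    filter_upwards [h.mono, h.ae_forall_exists_lt hInt hpos] with ω hmono hex
    rw [abs_sub_le_iff]
    constructor
    · linarith [exceedanceTime_le_firstExceedance (f := fun u => D u ω) (hex t)]
    · linarith [firstExceedance_sub_one_le_exceedanceTime hmono (hex t)]
  have hE : Integrable (fun ω => exceedanceTime (fun u => D u ω) t) P := by
    refine (hν.add (integrable_const 1)).mono'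
      (h.aestronglyMeasurable_exceedanceTime hInt hpos t) ?_
    filter_upwards [hclose] with ω hω
    have := abs_sub_abs_le_abs_sub (exceedanceTime (fun u => D u ω) t)
      (firstExceedance (fun n : ℕ => D n ω) t)
    rw [Pi.add_apply, Real.norm_eq_abs, Nat.abs_cast] at *
    linarith
  rw [← integral_sub hE hν]
  simpa using norm_integral_le_of_norm_le_const
    (hclose.mono fun ω hω => (Real.norm_eq_abs _).trans_le hω)

end IsLevySubordinator

/-- **renewal theorem.** For a Lévy subordinator `D` with
`0 < 𝔼[D 1] < ∞`, inverse `E t = inf {s ≥ 0 : D s > t}` and renewal function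
`U t = 𝔼[E t]`, one has `U t / t → 1 / 𝔼[D 1]` as `t → ∞`. -/
theorem inverse_subordinator_renewal_theorem {Ω : Type*} [MeasurableSpace Ω]
    (P : Measure Ω) (D : ℝ → Ω → ℝ) (φ : ℝ → ℝ)
    (h : IsLevySubordinator P D φ)
    (hInt : Integrable (D 1) P) (hpos : 0 < ∫ ω, D 1 ω ∂P)
    (E : ℝ → Ω → ℝ) (hE : ∀ t ω, E t ω = sInf {u : ℝ | 0 ≤ u ∧ t < D u ω})
    (U : ℝ → ℝ) (hU : ∀ t : ℝ, U t = ∫ ω, E t ω ∂P) :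
    Tendsto (fun t : ℝ => U t / t) atTop (nhds (1 / ∫ ω, D 1 ω ∂P)) := by
  have hUE : ∀ t, U t = ∫ ω, exceedanceTime (fun u => D u ω) t ∂P := fun t => by
    rw [hU]
    exact integral_congr_ae (ae_of_all _ (hE t))
  rw [one_div]
  refine tendsto_div_of_abs_sub_le (C := 1) ?_ (tendsto_div_of_mul_le_add hpos
    (fun r hr₀ hr => ?_) fun a ha => h.eventually_lt_integral_firstExceedance_div hInt hpos ha)
  · filter_upwards [eventually_ge_atTop 0] with t ht
    rw [hUE]
    exact h.abs_integral_exceedanceTime_sub_le hInt hpos ht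
  · obtain ⟨c, hc⟩ := h.exists_mul_integral_firstExceedance_le hInt hpos hr₀ hr
    exact ⟨c, (eventually_ge_atTop 0).mono hc⟩
end
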